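/- Let S and A be nonempty finite sets and let 𝒫 ⊆ Δ(S)^{S×A} be a compact uncertainty set. For every stationary policy π ∈ Δ(A)^S, every r ∈ ℝ^{S×A×S}, every γ ∈ [0,1) and every P ∈ 𝒫, the componentwise inequalities û^π ≤ u^π ≤ v^{π,P} hold; moreover u^π ≤ u* componentwise, where u* is the unique fixed point of the operator T(v)_s = max_{p∈Δ(A)} min_{P∈𝒫} ∑_{a∈A} p_a ∑_{s'∈S} P_{sas'}(r_{sas'} + γ v_{s'}). -/
import Mathlib


open scoped BigOperators

namespace RMDP

variable {S A : Type*} [Fintype S] [Fintype A]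

def IsKernel (P : S → A → S → ℝ) : Prop := ∀ s a, P s a ∈ stdSimplex ℝ S

def IsPolicy (π : S → A → ℝ) : Prop := ∀ s, π s ∈ stdSimplex ℝ A

def NextStateIndep (r : S → A → S → ℝ) : Prop :=
  ∀ (s : S) (a : A) (s' s'' : S), r s a s' = r s a s''

noncomputable def minOver {K : Type*} (K0 : Set K) (f : K → ℝ) : ℝ := sInf (f '' K0)

noncomputable def maxOver {K : Type*} (K0 : Set K) (f : K → ℝ) : ℝ := sSup (f '' K0)

noncomputable def TpiP (π : S → A → ℝ) (r : S → A → S → ℝ) (γ : ℝ)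
    (P : S → A → S → ℝ) (v : S → ℝ) : S → ℝ :=
  fun s => ∑ a, π s a * ∑ s', P s a s' * (r s a s' + γ * v s')

noncomputable def Tpi (US : Set (S → A → S → ℝ)) (π : S → A → ℝ)
    (r : S → A → S → ℝ) (γ : ℝ) (v : S → ℝ) : S → ℝ :=
  fun s => minOver US (fun P => ∑ a, π s a * ∑ s', P s a s' * (r s a s' + γ * v s'))

noncomputable def TpiHat (US : Set (S → A → S → ℝ)) (π : S → A → ℝ)
    (r : S → A → S → ℝ) (γ : ℝ) (v : S → ℝ) : S → ℝ :=
  fun s => ∑ a, π s a * minOver US (fun P => ∑ s', P s a s' * (r s a s' + γ * v s'))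

noncomputable def Topt (US : Set (S → A → S → ℝ)) (r : S → A → S → ℝ) (γ : ℝ)
    (v : S → ℝ) : S → ℝ :=
  fun s => maxOver (stdSimplex ℝ A)
    (fun p => minOver US (fun P => ∑ a, p a * ∑ s', P s a s' * (r s a s' + γ * v s')))

def IsHPolicy (π : List (S × A) → S → A → ℝ) : Prop := ∀ h s, π h s ∈ stdSimplex ℝ A

noncomputable def expRHH (π : List (S × A) → S → A → ℝ)
    (Q : List (S × A) → S → A → S → ℝ) (r : S → A → S → ℝ) :
    ℕ → List (S × A) → S → ℝ
  | 0, h, s => ∑ a, π h s a * ∑ s', Q (h ++ [(s, a)]) s a s' * r s a s'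
  | (t + 1), h, s =>
      ∑ a, π h s a * ∑ s', Q (h ++ [(s, a)]) s a s' * expRHH π Q r t (h ++ [(s, a)]) s'

noncomputable def vHH (π : List (S × A) → S → A → ℝ)
    (Q : List (S × A) → S → A → S → ℝ) (r : S → A → S → ℝ) (γ : ℝ) (s : S) : ℝ :=
  ∑' t : ℕ, γ ^ t * expRHH π Q r t [] s

def STractable (US : Set (S → A → S → ℝ)) : Prop :=
  ∀ π : S → A → ℝ, IsPolicy π →
    ∀ (r : S → A → S → ℝ) (γ : ℝ), 0 ≤ γ → γ < 1 →
      ∀ v : (S → A → S → ℝ) → S → ℝ, (∀ P ∈ US, TpiP π r γ P (v P) = v P) →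
        ∀ u : S → ℝ, Tpi US π r γ u = u →
          ∀ μ ∈ stdSimplex ℝ S,
            minOver US (fun P => ∑ s, μ s * v P s) = ∑ s, μ s * u s

def SATractable (US : Set (S → A → S → ℝ)) : Prop :=
  ∀ π : S → A → ℝ, IsPolicy π →
    ∀ (r : S → A → S → ℝ) (γ : ℝ), 0 ≤ γ → γ < 1 →
      ∀ v : (S → A → S → ℝ) → S → ℝ, (∀ P ∈ US, TpiP π r γ P (v P) = v P) →
        ∀ uhat : S → ℝ, TpiHat US π r γ uhat = uhat →
          ∀ μ ∈ stdSimplex ℝ S,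
            minOver US (fun P => ∑ s, μ s * v P s) = ∑ s, μ s * uhat s

def WeakSTractable (US : Set (S → A → S → ℝ)) : Prop :=
  ∀ π : S → A → ℝ, IsPolicy π →
    ∀ (r : S → A → S → ℝ), NextStateIndep r → ∀ γ : ℝ, 0 ≤ γ → γ < 1 →
      ∀ v : (S → A → S → ℝ) → S → ℝ, (∀ P ∈ US, TpiP π r γ P (v P) = v P) →
        ∀ u : S → ℝ, Tpi US π r γ u = u →
          ∀ μ ∈ stdSimplex ℝ S,
            minOver US (fun P => ∑ s, μ s * v P s) = ∑ s, μ s * u s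

def WeakSATractable (US : Set (S → A → S → ℝ)) : Prop :=
  ∀ π : S → A → ℝ, IsPolicy π →
    ∀ (r : S → A → S → ℝ), NextStateIndep r → ∀ γ : ℝ, 0 ≤ γ → γ < 1 →
      ∀ v : (S → A → S → ℝ) → S → ℝ, (∀ P ∈ US, TpiP π r γ P (v P) = v P) →
        ∀ uhat : S → ℝ, TpiHat US π r γ uhat = uhat →
          ∀ μ ∈ stdSimplex ℝ S,
            minOver US (fun P => ∑ s, μ s * v P s) = ∑ s, μ s * uhat s

def SSPs (US : Set (S → A → S → ℝ)) : Prop :=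
  ∀ V : S → A → S → ℝ, ∃ Pstar ∈ US, ∀ s : S, ∀ P ∈ US,
    (∑ a, ∑ s', Pstar s a s' * V s a s') ≤ ∑ a, ∑ s', P s a s' * V s a s'

def SSPsa (US : Set (S → A → S → ℝ)) : Prop :=
  ∀ V : S → A → S → ℝ, ∃ Pstar ∈ US, ∀ (s : S) (a : A), ∀ P ∈ US,
    (∑ s', Pstar s a s' * V s a s') ≤ ∑ s', P s a s' * V s a s'

def WeakSSPs (US : Set (S → A → S → ℝ)) : Prop :=
  ∀ π : S → A → ℝ, IsPolicy π → ∀ V : S → ℝ, ∃ Pstar ∈ US, ∀ s : S, ∀ P ∈ US,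
    (∑ a, π s a * ∑ s', Pstar s a s' * V s') ≤ ∑ a, π s a * ∑ s', P s a s' * V s'

def WeakSSPsa (US : Set (S → A → S → ℝ)) : Prop :=
  ∀ V : S → ℝ, ∃ Pstar ∈ US, ∀ (s : S) (a : A), ∀ P ∈ US,
    (∑ s', Pstar s a s' * V s') ≤ ∑ s', P s a s' * V s'


section Aux19

lemma dot_le' {ι : Type*} [Fintype ι] {p : ι → ℝ} (hp : p ∈ stdSimplex ℝ ι)
    {x : ι → ℝ} {b : ℝ} (hx : ∀ i, x i ≤ b) : ∑ i, p i * x i ≤ b := by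
  calc ∑ i, p i * x i ≤ ∑ i, p i * b :=
        Finset.sum_le_sum fun i _ => mul_le_mul_of_nonneg_left (hx i) (hp.1 i)
    _ = b := by rw [← Finset.sum_mul, hp.2, one_mul]

lemma le_dot' {ι : Type*} [Fintype ι] {p : ι → ℝ} (hp : p ∈ stdSimplex ℝ ι)
    {x : ι → ℝ} {b : ℝ} (hx : ∀ i, b ≤ x i) : b ≤ ∑ i, p i * x i := by
  calc b = ∑ i, p i * b := by rw [← Finset.sum_mul, hp.2, one_mul]
    _ ≤ ∑ i, p i * x i :=
        Finset.sum_le_sum fun i _ => mul_le_mul_of_nonneg_left (hx i) (hp.1 i)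

lemma dot_le_dot_add' {ι : Type*} [Fintype ι] {p : ι → ℝ} (hp : p ∈ stdSimplex ℝ ι)
    {x y : ι → ℝ} {c : ℝ} (h : ∀ i, x i ≤ y i + c) :
    ∑ i, p i * x i ≤ (∑ i, p i * y i) + c := by
  have h1 : ∑ i, p i * x i ≤ ∑ i, (p i * y i + p i * c) := by
    refine Finset.sum_le_sum fun i _ => ?_
    have h2 := mul_le_mul_of_nonneg_left (h i) (hp.1 i)
    have h3 := mul_add (p i) (y i) c
    linarith
  rw [Finset.sum_add_distrib, ← Finset.sum_mul, hp.2, one_mul] at h1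
  exact h1

/-- Generic fixed-point comparison. -/
lemma fix_le_fix {S : Type*} [Fintype S] [Nonempty S] {γ : ℝ} (hγ1 : γ < 1)
    (u1 u2 : S → ℝ) (T2 : (S → ℝ) → S → ℝ)
    (hdom : ∀ s, u1 s ≤ T2 u1 s) (hfix : ∀ s, T2 u2 s = u2 s)
    (hshift : ∀ c : ℝ, 0 ≤ c → (∀ s, u1 s ≤ u2 s + c) → ∀ s, T2 u1 s ≤ T2 u2 s + γ * c) :
    ∀ s, u1 s ≤ u2 s := by
  set c0 := Finset.univ.sup' Finset.univ_nonempty (fun s => u1 s - u2 s) with hc0def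
  have hc0 : ∀ s, u1 s - u2 s ≤ c0 := fun s =>
    Finset.le_sup' (fun s => u1 s - u2 s) (Finset.mem_univ s)
  set c := max c0 0 with hcdef
  have hcle : ∀ s, u1 s ≤ u2 s + c := by
    intro s; have h1 := hc0 s; have h2 := le_max_left c0 0; linarith
  have key : ∀ s, u1 s ≤ u2 s + γ * c := by
    intro s
    have h1 := hdom s
    have h2 := hshift c (le_max_right _ _) hcle s
    rw [hfix s] at h2
    linarith
  obtain ⟨s0, -, hs0⟩ := Finset.exists_mem_eq_sup' (Finset.univ_nonempty)
      (fun s => u1 s - u2 s)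
  have hc0le : c0 ≤ γ * c := by
    rw [hc0def, hs0]; have := key s0; linarith
  intro s
  have h1 := hc0 s
  rcases le_or_gt c0 0 with h | h
  · linarith
  · have hceq : c = c0 := max_eq_left h.le
    rw [hceq] at hc0le
    nlinarith

variable {S A : Type*} [Fintype S] [Fintype A] [Nonempty S] [Nonempty A]
variable {US : Set (S → A → S → ℝ)} {r : S → A → S → ℝ} {γ : ℝ}

lemma inner_lb {P : S → A → S → ℝ} (hk : IsKernel P) {p : A → ℝ}
    (hp : p ∈ stdSimplex ℝ A) (v : S → ℝ) (s : S) :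
    Finset.univ.inf' Finset.univ_nonempty (fun q : A × S => r s q.1 q.2 + γ * v q.2) ≤
      ∑ a, p a * ∑ s', P s a s' * (r s a s' + γ * v s') :=
  le_dot' hp fun a => le_dot' (hk s a) fun s' =>
    Finset.inf'_le _ (Finset.mem_univ ((a, s') : A × S))

lemma inner_ub {P : S → A → S → ℝ} (hk : IsKernel P) {p : A → ℝ}
    (hp : p ∈ stdSimplex ℝ A) (v : S → ℝ) (s : S) :
    (∑ a, p a * ∑ s', P s a s' * (r s a s' + γ * v s')) ≤
      Finset.univ.sup' Finset.univ_nonempty (fun q : A × S => r s q.1 q.2 + γ * v q.2) :=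
  dot_le' hp fun a => dot_le' (hk s a) fun s' =>
    Finset.le_sup' (fun q : A × S => r s q.1 q.2 + γ * v q.2)
      (Finset.mem_univ ((a, s') : A × S))

lemma bddBelow_g (hker : ∀ P ∈ US, IsKernel P) {p : A → ℝ}
    (hp : p ∈ stdSimplex ℝ A) (v : S → ℝ) (s : S) :
    BddBelow ((fun P : S → A → S → ℝ =>
      ∑ a, p a * ∑ s', P s a s' * (r s a s' + γ * v s')) '' US) := by
  refine ⟨Finset.univ.inf' Finset.univ_nonempty
    (fun q : A × S => r s q.1 q.2 + γ * v q.2), ?_⟩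
  rintro x ⟨P, hP, rfl⟩
  exact inner_lb (hker P hP) hp v s

lemma bddBelow_h (hker : ∀ P ∈ US, IsKernel P) (v : S → ℝ) (s : S) (a : A) :
    BddBelow ((fun P : S → A → S → ℝ =>
      ∑ s', P s a s' * (r s a s' + γ * v s')) '' US) := by
  refine ⟨Finset.univ.inf' Finset.univ_nonempty (fun s' : S => r s a s' + γ * v s'), ?_⟩
  rintro x ⟨P, hP, rfl⟩
  exact le_dot' (hker P hP s a) fun s' => Finset.inf'_le _ (Finset.mem_univ s')

/-- shift lemma for the min-over-kernels operator, generic in the mixing weights. -/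
lemma minG_shift (hne : US.Nonempty) (hker : ∀ P ∈ US, IsKernel P)
    (hγ0 : 0 ≤ γ) {p : A → ℝ} (hp : p ∈ stdSimplex ℝ A)
    {v w : S → ℝ} {c : ℝ} (hvw : ∀ s, v s ≤ w s + c) (s : S) :
    minOver US (fun P => ∑ a, p a * ∑ s', P s a s' * (r s a s' + γ * v s')) ≤
      minOver US (fun P => ∑ a, p a * ∑ s', P s a s' * (r s a s' + γ * w s')) + γ * c := by
  unfold minOver
  rw [← sub_le_iff_le_add]
  refine le_csInf (hne.image _) ?_
  rintro b ⟨P, hP, rfl⟩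
  rw [sub_le_iff_le_add]
  have step : ∀ Q ∈ US, (∑ a, p a * ∑ s', Q s a s' * (r s a s' + γ * v s')) ≤
      (∑ a, p a * ∑ s', Q s a s' * (r s a s' + γ * w s')) + γ * c := by
    intro Q hQ
    refine dot_le_dot_add' hp fun a => dot_le_dot_add' (hker Q hQ s a) fun s' => ?_
    have h1 := hvw s'
    have h2 : γ * v s' ≤ γ * (w s' + c) := mul_le_mul_of_nonneg_left h1 hγ0
    have h3 := mul_add γ (w s') c
    linarith
  calc sInf ((fun P : S → A → S → ℝ =>
          ∑ a, p a * ∑ s', P s a s' * (r s a s' + γ * v s')) '' US)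
      ≤ ∑ a, p a * ∑ s', P s a s' * (r s a s' + γ * v s') :=
        csInf_le (bddBelow_g hker hp v s) ⟨P, hP, rfl⟩
    _ ≤ (∑ a, p a * ∑ s', P s a s' * (r s a s' + γ * w s')) + γ * c := step P hP

lemma TpiP_shift {π : S → A → ℝ} (hπ : IsPolicy π) {P : S → A → S → ℝ}
    (hk : IsKernel P) (hγ0 : 0 ≤ γ)
    {v w : S → ℝ} {c : ℝ} (hvw : ∀ s, v s ≤ w s + c) (s : S) :
    TpiP π r γ P v s ≤ TpiP π r γ P w s + γ * c := by
  unfold TpiP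
  refine dot_le_dot_add' (hπ s) fun a => dot_le_dot_add' (hk s a) fun s' => ?_
  have h1 := hvw s'
  have h2 : γ * v s' ≤ γ * (w s' + c) := mul_le_mul_of_nonneg_left h1 hγ0
  have h3 := mul_add γ (w s') c
  linarith

lemma Topt_shift (hne : US.Nonempty) (hker : ∀ P ∈ US, IsKernel P) (hγ0 : 0 ≤ γ)
    {v w : S → ℝ} {c : ℝ} (hc : 0 ≤ c) (hvw : ∀ s, v s ≤ w s + c) (s : S) :
    Topt US r γ v s ≤ Topt US r γ w s + γ * c := by
  unfold Topt maxOver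
  haveI := Classical.decEq A
  have hΔ : (stdSimplex ℝ A).Nonempty := ⟨_, single_mem_stdSimplex ℝ (Classical.arbitrary A)⟩
  refine csSup_le (hΔ.image _) ?_
  rintro b ⟨p, hp, rfl⟩
  have h1 : minOver US (fun P => ∑ a, p a * ∑ s', P s a s' * (r s a s' + γ * v s')) ≤
      minOver US (fun P => ∑ a, p a * ∑ s', P s a s' * (r s a s' + γ * w s')) + γ * c :=
    minG_shift hne hker hγ0 hp hvw s
  have h2 : minOver US (fun P => ∑ a, p a * ∑ s', P s a s' * (r s a s' + γ * w s')) ≤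
      sSup ((fun p : A → ℝ => minOver US
        (fun P => ∑ a, p a * ∑ s', P s a s' * (r s a s' + γ * w s'))) '' stdSimplex ℝ A) := by
    refine le_csSup ?_ ⟨p, hp, rfl⟩
    refine ⟨Finset.univ.sup' Finset.univ_nonempty
      (fun q : A × S => r s q.1 q.2 + γ * w q.2), ?_⟩
    rintro x ⟨q, hq, rfl⟩
    obtain ⟨P0, hP0⟩ := hne
    calc minOver US (fun P => ∑ a, q a * ∑ s', P s a s' * (r s a s' + γ * w s'))
        ≤ ∑ a, q a * ∑ s', P0 s a s' * (r s a s' + γ * w s') :=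
          csInf_le (bddBelow_g hker hq w s) ⟨P0, hP0, rfl⟩
      _ ≤ _ := inner_ub (hker P0 hP0) hq w s
  linarith

end Aux19

theorem stmt19 {S A : Type*} [Fintype S] [Fintype A] [Nonempty S] [Nonempty A]
    (US : Set (S → A → S → ℝ)) (hne : US.Nonempty) (hker : ∀ P ∈ US, IsKernel P)
    (hcpt : IsCompact US)
    (π : S → A → ℝ) (hπ : IsPolicy π)
    (r : S → A → S → ℝ) (γ : ℝ) (hγ0 : 0 ≤ γ) (hγ1 : γ < 1)
    (P : S → A → S → ℝ) (hP : P ∈ US)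
    (uhat u vP ustar : S → ℝ)
    (huhat : TpiHat US π r γ uhat = uhat) (hu : Tpi US π r γ u = u)
    (hvP : TpiP π r γ P vP = vP) (hustar : Topt US r γ ustar = ustar) :
    (∀ s, uhat s ≤ u s) ∧ (∀ s, u s ≤ vP s) ∧ ∀ s, u s ≤ ustar s := by
  haveI := Classical.decEq A
  have hΔ : (stdSimplex ℝ A).Nonempty := ⟨_, single_mem_stdSimplex ℝ (Classical.arbitrary A)⟩
  have huf : ∀ s, Tpi US π r γ u s = u s := fun s => congrFun hu s
  -- 1. uhat ≤ u
  have h1 : ∀ s, uhat s ≤ u s := by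
    refine fix_le_fix hγ1 uhat u (Tpi US π r γ) ?_ huf ?_
    · intro s
      have hfix : TpiHat US π r γ uhat s = uhat s := congrFun huhat s
      rw [← hfix]
      unfold TpiHat Tpi minOver
      refine le_csInf (hne.image _) ?_
      rintro b ⟨Q, hQ, rfl⟩
      refine Finset.sum_le_sum fun a _ => mul_le_mul_of_nonneg_left ?_ (hπ s |>.1 a)
      exact csInf_le (bddBelow_h hker uhat s a) ⟨Q, hQ, rfl⟩
    · intro c hc hle s
      exact minG_shift hne hker hγ0 (hπ s) hle s
  -- 2. u ≤ vP
  have h2 : ∀ s, u s ≤ vP s := by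
    refine fix_le_fix hγ1 u vP (TpiP π r γ P) ?_ (fun s => congrFun hvP s) ?_
    · intro s
      rw [← huf s]
      exact csInf_le (bddBelow_g (hker) (hπ s) u s) ⟨P, hP, rfl⟩
    · intro c hc hle s
      exact TpiP_shift hπ (hker P hP) hγ0 hle s
  -- 3. u ≤ ustar
  have h3 : ∀ s, u s ≤ ustar s := by
    refine fix_le_fix hγ1 u ustar (Topt US r γ) ?_ (fun s => congrFun hustar s) ?_
    · intro s
      rw [← huf s]
      unfold Tpi Topt
      refine le_csSup ?_ ⟨π s, hπ s, rfl⟩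
      refine ⟨Finset.univ.sup' Finset.univ_nonempty
        (fun q : A × S => r s q.1 q.2 + γ * u q.2), ?_⟩
      rintro x ⟨q, hq, rfl⟩
      obtain ⟨P0, hP0⟩ := hne
      calc minOver US (fun Q => ∑ a, q a * ∑ s', Q s a s' * (r s a s' + γ * u s'))
          ≤ ∑ a, q a * ∑ s', P0 s a s' * (r s a s' + γ * u s') :=
            csInf_le (bddBelow_g hker hq u s) ⟨P0, hP0, rfl⟩
        _ ≤ _ := inner_ub (hker P0 hP0) hq u s
    · intro c hc hle s
      exact Topt_shift hne hker hγ0 hc hle s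
  exact ⟨h1, h2, h3⟩


end RMDP
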